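/- Backward induction for the diffusion marginals: suppose q(z_T|z_0,h) = N(√α_T z_0 + √c_T h, (1-α_T)I) and for each 2 ≤ t ≤ T, q(z_{t-1}|z_t,z_0,h) = N(κ_t z_t + λ_t z_0 + ν_t h, σ_t² I) with the paper's coefficients. Then for every 1 ≤ t ≤ T, q(z_t|z_0,h) = N(√α_t z_0 + √c_t h, (1-α_t)I). -/

import Mathlib

/-!
Each reverse step integrates an affine Gaussian kernel `x ↦ N(κ x + b, σ²)` against a Gaussian,
which is the convolution of the rescaled Gaussian `N(κ m, κ² v)` with `N(b, σ²)`, hence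
`N(κ m + b, κ² v + σ²)`. The coefficients λ_t, ν_t make the mean come out right, and the choice
of κ_t is exactly `κ_t² (1 - α_t) + σ_t² = 1 - α_{t-1}`, so the Gaussian form propagates from
`T` down to `1`.
-/

open MeasureTheory ProbabilityTheory
open scoped NNReal

namespace MeasureTheory.Measure

variable {α M : Type*} [MeasurableSpace α] [AddMonoid M] [MeasurableSpace M] [MeasurableAdd₂ M]

lemma measurable_map_const_add (ν : Measure M) [SFinite ν] {f : α → M} (hf : Measurable f) :
    Measurable (fun x => ν.map (f x + ·)) := by
  refine measurable_of_measurable_coe _ fun s hs => ?_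
  simp_rw [map_apply (measurable_const_add _) hs]
  exact measurable_measure_prodMk_left (hs.preimage measurable_add) |>.comp hf

lemma bind_map_const_add (μ : Measure α) (ν : Measure M) [SFinite ν] {f : α → M}
    (hf : Measurable f) :
    μ.bind (fun x => ν.map (f x + ·)) = μ.map f ∗ ν := by
  ext s hs
  have hind : Measurable (s.indicator (1 : M → ENNReal)) := measurable_one.indicator hs
  rw [bind_apply hs (measurable_map_const_add ν hf).aemeasurable, ← lintegral_indicator_one hs,
    lintegral_conv hind, lintegral_map _ hf]
  · congr with x
    rw [map_apply (measurable_const_add _) hs,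
      ← lintegral_indicator_one (hs.preimage (measurable_const_add _))]
    rfl
  · exact (hind.comp measurable_add).lintegral_prod_right'

end MeasureTheory.Measure

namespace ProbabilityTheory

lemma gaussianReal_bind_affine (m b κ : ℝ) (v w : ℝ≥0) :
    (gaussianReal m v).bind (fun x => gaussianReal (κ * x + b) w)
      = gaussianReal (κ * m + b) (.mk (κ ^ 2) (sq_nonneg κ) * v + w) := by
  have hkernel : (fun x => gaussianReal (κ * x + b) w)
      = fun x => (gaussianReal b w).map (κ * x + ·) := by
    ext1 x
    rw [gaussianReal_map_const_add, add_comm]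
  rw [hkernel, Measure.bind_map_const_add _ _ (measurable_const_mul κ),
    gaussianReal_map_const_mul, gaussianReal_conv_gaussianReal]

lemma gaussianReal_bind_posterior {a a' c c' s κ : ℝ} (z₀ h : ℝ) (ha : a ≤ 1)
    (hκ : κ ^ 2 * (1 - a) + s ^ 2 = 1 - a') :
    (gaussianReal (√a * z₀ + √c * h) (1 - a).toNNReal).bind
        (fun x => gaussianReal (κ * x + (√a' - √a * κ) * z₀ + (√c' - √c * κ) * h)
          (s ^ 2).toNNReal)
      = gaussianReal (√a' * z₀ + √c' * h) (1 - a').toNNReal := by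
  simp_rw [add_assoc (κ * _), gaussianReal_bind_affine]
  congr 1
  · ring
  · rw [← hκ, ← NNReal.coe_inj]
    simp only [NNReal.coe_add, NNReal.coe_mul, NNReal.coe_mk,
      Real.coe_toNNReal _ (sub_nonneg.2 ha), Real.coe_toNNReal _ (sq_nonneg s),
      Real.coe_toNNReal _ (by positivity : 0 ≤ κ ^ 2 * (1 - a) + s ^ 2)]

end ProbabilityTheory

theorem diffusion_marginals_by_induction_general (z₀ h : ℝ) (T : ℕ)
    (α c σ : ℕ → ℝ)
    (hα : ∀ t, α t ∈ Set.Ioo (0:ℝ) 1)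
    (hσ2 : ∀ t, σ t ^ 2 < 1 - α (t - 1))
    (κ lam ν : ℕ → ℝ)
    (hκ : ∀ t, κ t = Real.sqrt ((1 - α (t - 1) - σ t ^ 2) / (1 - α t)))
    (hlam : ∀ t, lam t = Real.sqrt (α (t - 1)) - Real.sqrt (α t) * κ t)
    (hν : ∀ t, ν t = Real.sqrt (c (t - 1)) - Real.sqrt (c t) * κ t)
    (q : ℕ → Measure ℝ)
    (hqT : q T = gaussianReal (Real.sqrt (α T) * z₀ + Real.sqrt (c T) * h)
                   (1 - α T).toNNReal)
    (hstep : ∀ t : ℕ, 2 ≤ t → t ≤ T →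
      q (t - 1) = (q t).bind
        (fun x => gaussianReal (κ t * x + lam t * z₀ + ν t * h)
          (σ t ^ 2).toNNReal)) :
    ∀ t : ℕ, 1 ≤ t → t ≤ T →
      q t = gaussianReal (Real.sqrt (α t) * z₀ + Real.sqrt (c t) * h)
              (1 - α t).toNNReal := by
  intro t ht htT
  refine Nat.decreasingInduction' (fun k _ htk ih => ?_) htT hqT
  have hα_lt : α (k + 1) < 1 := (hα (k + 1)).2
  have hvar : κ (k + 1) ^ 2 * (1 - α (k + 1)) + σ (k + 1) ^ 2 = 1 - α k := by
    have hσk : σ (k + 1) ^ 2 < 1 - α k := hσ2 (k + 1)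
    rw [hκ, Nat.add_sub_cancel, Real.sq_sqrt (by bound), div_mul_cancel₀ _ (by linarith)]
    ring
  have hq := hstep (k + 1) (by omega) (by omega)
  rw [Nat.add_sub_cancel, ih, hlam, hν, Nat.add_sub_cancel] at hq
  rw [hq, gaussianReal_bind_posterior z₀ h hα_lt.le hvar]

/-- Backward induction for the diffusion marginals: if
q(z_T|z_0,h) = N(√α_T z_0 + √c_T h, 1-α_T) and for each 2 ≤ t ≤ T the posterior
q(z_{t-1}|z_t,z_0,h) = N(κ_t z_t + λ_t z_0 + ν_t h, σ_t²) with the paper's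
coefficients, then for all 1 ≤ t ≤ T, q(z_t|z_0,h) = N(√α_t z_0 + √c_t h, 1-α_t). -/
theorem diffusion_marginals_by_induction (z₀ h : ℝ) (T : ℕ) (hT : 1 ≤ T)
    (α c σ : ℕ → ℝ)
    (hα : ∀ t, α t ∈ Set.Ioo (0:ℝ) 1)
    (hc : ∀ t, 0 ≤ c t)
    (hσ : ∀ t, 0 ≤ σ t)
    (hσ2 : ∀ t, σ t ^ 2 < 1 - α (t - 1))
    (κ lam ν : ℕ → ℝ)
    (hκ : ∀ t, κ t = Real.sqrt ((1 - α (t - 1) - σ t ^ 2) / (1 - α t)))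
    (hlam : ∀ t, lam t = Real.sqrt (α (t - 1)) - Real.sqrt (α t) * κ t)
    (hν : ∀ t, ν t = Real.sqrt (c (t - 1)) - Real.sqrt (c t) * κ t)
    (q : ℕ → Measure ℝ)
    (hqT : q T = gaussianReal (Real.sqrt (α T) * z₀ + Real.sqrt (c T) * h)
                   (1 - α T).toNNReal)
    (hstep : ∀ t : ℕ, 2 ≤ t → t ≤ T →
      q (t - 1) = (q t).bind
        (fun x => gaussianReal (κ t * x + lam t * z₀ + ν t * h)
          (σ t ^ 2).toNNReal)) :
    ∀ t : ℕ, 1 ≤ t → t ≤ T →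
      q t = gaussianReal (Real.sqrt (α t) * z₀ + Real.sqrt (c t) * h)
              (1 - α t).toNNReal :=
  diffusion_marginals_by_induction_general z₀ h T α c σ hα hσ2 κ lam ν hκ hlam hν q hqT hstep
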